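/- arXiv:2510.16323 — 5 statements merged into one kernel-verified Lean document; each statement's English description precedes it below -/
import Mathlib

section
/- For every integer r ≥ 1 and all rational numbers μ > μ' ≥ −1 with μ ≥ 0, one has β_{r,μ'} < β_{r,μ}. -/
/-- `α_μ := ⌊μ⌋ + 1`, floor taken in `ℚ`, viewed as a rational number. -/
def alphaQ (μ : ℚ) : ℚ := (⌊μ⌋ : ℚ) + 1

/-- `β_{r,μ} := r·α_μ·(2μ − α_μ + 2)`. -/
def betaQ (r : ℤ) (μ : ℚ) : ℚ := (r : ℚ) * alphaQ μ * (2 * μ - alphaQ μ + 2)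

/-!
Write `β_{1,μ} = α (2μ − α + 2)` with `α = α_μ`. On each interval `[n, n + 1)` with `n ≥ 0` this is
affine in `μ` with slope `2α > 0`. Across integers it jumps upwards: for `μ ≥ -1` one has
`α² ≤ β_{1,μ} ≤ α (α + 2) < (α + 1)²`, so a larger floor forces a larger value.
Finally `β_{r,μ} = r · β_{1,μ}` with `r > 0`.
-/

lemma betaQ_eq_mul_betaQ_one (r : ℤ) (μ : ℚ) : betaQ r μ = r * betaQ 1 μ := by
  simp only [betaQ, Int.cast_one, one_mul, mul_assoc]

lemma alphaQ_sub_one_le (μ : ℚ) : alphaQ μ - 1 ≤ μ := by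
  simpa [alphaQ] using Int.floor_le μ

lemma lt_alphaQ (μ : ℚ) : μ < alphaQ μ :=
  Int.lt_floor_add_one μ

lemma alphaQ_nonneg {μ : ℚ} (hμ : -1 ≤ μ) : 0 ≤ alphaQ μ := by
  have : (-1 : ℚ) ≤ ⌊μ⌋ := by exact_mod_cast Int.le_floor.mpr (by exact_mod_cast hμ)
  simp only [alphaQ]
  linarith

lemma sq_alphaQ_le_betaQ_one {μ : ℚ} (hμ : -1 ≤ μ) : alphaQ μ ^ 2 ≤ betaQ 1 μ := by
  have hα := alphaQ_nonneg hμ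
  have hμα := alphaQ_sub_one_le μ
  simp only [betaQ, Int.cast_one, one_mul]
  nlinarith

lemma betaQ_one_le {μ : ℚ} (hμ : -1 ≤ μ) : betaQ 1 μ ≤ alphaQ μ * (alphaQ μ + 2) := by
  have hα := alphaQ_nonneg hμ
  have hμα := lt_alphaQ μ
  simp only [betaQ, Int.cast_one, one_mul]
  nlinarith

lemma betaQ_one_lt_of_floor_lt {μ μ' : ℚ} (hμ' : -1 ≤ μ') (h : ⌊μ'⌋ < ⌊μ⌋) :
    betaQ 1 μ' < betaQ 1 μ := by
  have hα : alphaQ μ' + 1 ≤ alphaQ μ := by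
    have : (⌊μ'⌋ : ℚ) + 1 ≤ ⌊μ⌋ := by exact_mod_cast Int.add_one_le_of_lt h
    simp only [alphaQ]
    linarith
  have hα' := alphaQ_nonneg hμ'
  calc betaQ 1 μ' ≤ alphaQ μ' * (alphaQ μ' + 2) := betaQ_one_le hμ'
    _ < (alphaQ μ' + 1) ^ 2 := by nlinarith
    _ ≤ alphaQ μ ^ 2 := by gcongr
    _ ≤ betaQ 1 μ := sq_alphaQ_le_betaQ_one (by linarith [alphaQ_sub_one_le μ])

lemma betaQ_one_lt_of_floor_eq {μ μ' : ℚ} (hμ : 0 ≤ μ) (hlt : μ' < μ) (h : ⌊μ'⌋ = ⌊μ⌋) :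
    betaQ 1 μ' < betaQ 1 μ := by
  have hα : alphaQ μ' = alphaQ μ := by simp only [alphaQ, h]
  have hpos : 0 < alphaQ μ := by
    have : (0 : ℚ) ≤ ⌊μ⌋ := by exact_mod_cast Int.floor_nonneg.mpr hμ
    simp only [alphaQ]
    linarith
  simp only [betaQ, Int.cast_one, one_mul, hα]
  nlinarith

theorem stmt_4 (r : ℤ) (hr : 1 ≤ r) (μ μ' : ℚ) (hμ' : -1 ≤ μ') (hμμ : μ' < μ)
    (hμ : 0 ≤ μ) : betaQ r μ' < betaQ r μ := by
  have hβ : betaQ 1 μ' < betaQ 1 μ := by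
    rcases (Int.floor_le_floor hμμ.le).lt_or_eq with h | h
    · exact betaQ_one_lt_of_floor_lt hμ' h
    · exact betaQ_one_lt_of_floor_eq hμ hμμ h
  rw [betaQ_eq_mul_betaQ_one r μ', betaQ_eq_mul_betaQ_one r μ]
  exact mul_lt_mul_of_pos_left hβ (by exact_mod_cast hr)
end

section
/- Fix non-negative integers a ≤ b and a positive integer r, and set μ := (a+b)/(2r). For an integer ℓ with −1 ≤ ℓ ≤ ⌊(b−a)/r⌋ define μ''_ℓ := μ − (ℓ+1)/2 and θ_ℓ := β_{r,μ''_ℓ} + (ℓ+1)(r+a). Then for every integer ℓ with 0 ≤ ℓ ≤ ⌊(b−a)/r⌋, one has θ_ℓ < θ_{ℓ−1}, unless ℓ = ⌊(b−a)/r⌋, or ℓ = ⌊(b−a)/r⌋ − 1 and ⌊μ''_{ℓ−1}⌋ = ⌊μ''_ℓ⌋. -/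
theorem Int.floor_add_half_eq_or {K : Type*} [Field K] [LinearOrder K] [IsStrictOrderedRing K]
    [FloorRing K] (x : K) : ⌊x + 1 / 2⌋ = ⌊x⌋ ∨ ⌊x + 1 / 2⌋ = ⌊x⌋ + 1 := by
  have hlow : ⌊x⌋ ≤ ⌊x + 1 / 2⌋ := Int.floor_mono (by linarith)
  have hup : ⌊x + 1 / 2⌋ ≤ ⌊x⌋ + 1 := by
    rw [← Int.floor_add_one]
    exact Int.floor_mono (by linarith)
  omega

section BetaIncrement

variable {μ : ℚ}

theorem betaQ_add_half_of_floor_eq (r : ℤ) (h : ⌊μ + 1 / 2⌋ = ⌊μ⌋) :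
    betaQ r (μ + 1 / 2) = betaQ r μ + r * (⌊μ⌋ + 1) := by
  simp only [betaQ, alphaQ, h]
  ring

theorem betaQ_add_half_of_floor_eq_add_one (r : ℤ) (h : ⌊μ + 1 / 2⌋ = ⌊μ⌋ + 1) :
    betaQ r (μ + 1 / 2) = betaQ r μ + r * (2 * μ + 1 - ⌊μ⌋) := by
  simp only [betaQ, alphaQ, h]
  push_cast
  ring

theorem add_lt_betaQ_add_half_sub_of_floor_eq {r : ℤ} {a : ℚ} (hr : 0 < r)
    (h : ⌊μ + 1 / 2⌋ = ⌊μ⌋) (hμ : a + r ≤ r * (μ + 1 / 2)) : r + a < betaQ r (μ + 1 / 2) - betaQ r μ := by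
  have hr' : (0 : ℚ) < r := by exact_mod_cast hr
  have hlt : μ + 1 / 2 < ⌊μ⌋ + 1 := h ▸ Int.lt_floor_add_one (μ + 1 / 2)
  have := mul_lt_mul_of_pos_left hlt hr'
  rw [betaQ_add_half_of_floor_eq r h]
  linarith

theorem add_lt_betaQ_add_half_sub_of_floor_eq_add_one {r : ℤ} {a : ℚ} (hr : 0 < r)
    (h : ⌊μ + 1 / 2⌋ = ⌊μ⌋ + 1) (hμ : a ≤ r * μ) :
    r + a < betaQ r (μ + 1 / 2) - betaQ r μ := by
  have hr' : (0 : ℚ) < r := by exact_mod_cast hr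
  have hle : (⌊μ⌋ : ℚ) + 1 ≤ μ + 1 / 2 := by exact_mod_cast h ▸ Int.floor_le (μ + 1 / 2)
  have := mul_le_mul_of_nonneg_left hle hr'.le
  rw [betaQ_add_half_of_floor_eq_add_one r h]
  linarith

end BetaIncrement

theorem stmt_5_general (a b r : ℤ) (hr : 1 ≤ r)
    (ℓ : ℤ) (hℓ : ℓ ≤ ⌊((b : ℚ) - a) / r⌋) :
    letI μ : ℚ := ((a : ℚ) + b) / (2 * r)
    letI μ'' : ℤ → ℚ := fun l => μ - ((l : ℚ) + 1) / 2
    letI θ : ℤ → ℚ := fun l => betaQ r (μ'' l) + ((l : ℚ) + 1) * ((r : ℚ) + a)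
    θ ℓ < θ (ℓ - 1) ∨ ℓ = ⌊((b : ℚ) - a) / r⌋ ∨
      (ℓ = ⌊((b : ℚ) - a) / r⌋ - 1 ∧ ⌊μ'' (ℓ - 1)⌋ = ⌊μ'' ℓ⌋) := by
  beta_reduce
  set F := ⌊((b : ℚ) - a) / r⌋
  set m : ℚ := ((a : ℚ) + b) / (2 * r) - ((ℓ : ℚ) + 1) / 2
  have hr' : (0 : ℚ) < r := by exact_mod_cast hr
  have hm_pred : ((a : ℚ) + b) / (2 * r) - (((ℓ - 1 : ℤ) : ℚ) + 1) / 2 = m + 1 / 2 := by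
    push_cast; ring
  have h2rm : 2 * r * m = a + b - r * (ℓ + 1) := by
    simp only [m]; field_simp
  have hbound : ∀ n : ℤ, n ≤ F → (r : ℚ) * n ≤ b - a := fun n hn => by
    have := Int.le_floor.1 hn
    rw [le_div_iff₀ hr'] at this
    linarith
  rw [hm_pred]
  have hθ : betaQ r m + (ℓ + 1) * (r + a) <
        betaQ r (m + 1 / 2) + (((ℓ - 1 : ℤ) : ℚ) + 1) * (r + a) ↔
      r + a < betaQ r (m + 1 / 2) - betaQ r m := by
    push_cast; constructor <;> intro h <;> linarith
  rw [hθ]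
  rcases hℓ.eq_or_lt with hF | hF
  · exact Or.inr (Or.inl hF)
  rcases Int.floor_add_half_eq_or m with hm | hm
  · by_cases hF1 : ℓ = F - 1
    · exact Or.inr (Or.inr ⟨hF1, hm⟩)
    refine Or.inl (add_lt_betaQ_add_half_sub_of_floor_eq (by omega) hm ?_)
    have := hbound (ℓ + 2) (by omega)
    push_cast at this
    linarith
  · refine Or.inl (add_lt_betaQ_add_half_sub_of_floor_eq_add_one (by omega) hm ?_)
    have := hbound (ℓ + 1) (by omega)
    push_cast at this
    linarith

theorem stmt_5 (a b r : ℤ) (ha : 0 ≤ a) (hab : a ≤ b) (hr : 1 ≤ r)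
    (ℓ : ℤ) (hℓ0 : 0 ≤ ℓ) (hℓ : ℓ ≤ ⌊((b : ℚ) - a) / r⌋) :
    letI μ : ℚ := ((a : ℚ) + b) / (2 * r)
    letI μ'' : ℤ → ℚ := fun l => μ - ((l : ℚ) + 1) / 2
    letI θ : ℤ → ℚ := fun l => betaQ r (μ'' l) + ((l : ℚ) + 1) * ((r : ℚ) + a)
    θ ℓ < θ (ℓ - 1) ∨ ℓ = ⌊((b : ℚ) - a) / r⌋ ∨
      (ℓ = ⌊((b : ℚ) - a) / r⌋ - 1 ∧ ⌊μ'' (ℓ - 1)⌋ = ⌊μ'' ℓ⌋) :=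
  stmt_5_general a b r hr ℓ hℓ
end

section
/- Let k ≥ 0, r ≥ 1, ℓ ≥ 0 and m, n ≥ 0 be integers with 0 ≤ n − m < r and m + n < 2r, and set μ' := k + (m+n)/(2r). Then (r+m+n)(k+1)(k+ℓ+1) − m·k·(k+ℓ+1) − n·(k+1)(k+ℓ) = β_{r,μ'} + ℓ·(r + rk + m). -/
theorem alphaQ_intCast_add (k : ℤ) {x : ℚ} (hx₀ : 0 ≤ x) (hx₁ : x < 1) :
    alphaQ (k + x) = k + 1 := by
  rw [alphaQ, Int.floor_intCast_add, Int.floor_eq_zero_iff.mpr ⟨hx₀, hx₁⟩, add_zero]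

theorem betaQ_intCast_add (r k : ℤ) {x : ℚ} (hx₀ : 0 ≤ x) (hx₁ : x < 1) :
    betaQ r (k + x) = r * (k + 1) * (k + 1 + 2 * x) := by
  rw [betaQ, alphaQ_intCast_add k hx₀ hx₁]
  ring

theorem stmt_12_general (k r ℓ m n : ℤ) (hr : 1 ≤ r)
    (hm : 0 ≤ m) (hn : 0 ≤ n)
    (hmn : m + n < 2 * r) :
    letI μ' : ℚ := (k : ℚ) + ((m : ℚ) + n) / (2 * r)
    ((r : ℚ) + m + n) * ((k : ℚ) + 1) * ((k : ℚ) + ℓ + 1)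
        - (m : ℚ) * k * ((k : ℚ) + ℓ + 1)
        - (n : ℚ) * ((k : ℚ) + 1) * ((k : ℚ) + ℓ)
      = betaQ r μ' + (ℓ : ℚ) * ((r : ℚ) + r * k + m) := by
  have hr₀ : (0 : ℚ) < r := by exact_mod_cast hr
  have hfrac₀ : (0 : ℚ) ≤ ((m : ℚ) + n) / (2 * r) := by positivity
  have hfrac₁ : ((m : ℚ) + n) / (2 * r) < 1 := by
    rw [div_lt_one (by positivity)]
    exact_mod_cast hmn
  rw [betaQ_intCast_add r k hfrac₀ hfrac₁]
  field_simp
  ring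

theorem stmt_12 (k r ℓ m n : ℤ) (hk : 0 ≤ k) (hr : 1 ≤ r) (hℓ : 0 ≤ ℓ)
    (hm : 0 ≤ m) (hn : 0 ≤ n) (hnm : 0 ≤ n - m) (hnm' : n - m < r)
    (hmn : m + n < 2 * r) :
    letI μ' : ℚ := (k : ℚ) + ((m : ℚ) + n) / (2 * r)
    ((r : ℚ) + m + n) * ((k : ℚ) + 1) * ((k : ℚ) + ℓ + 1)
        - (m : ℚ) * k * ((k : ℚ) + ℓ + 1)
        - (n : ℚ) * ((k : ℚ) + 1) * ((k : ℚ) + ℓ)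
      = betaQ r μ' + (ℓ : ℚ) * ((r : ℚ) + r * k + m) :=
  stmt_12_general k r ℓ m n hr hm hn hmn
end

section
/- Let r ≥ 2 and 1 ≤ r' ≤ r − 1 be integers, and let μ, μ' be rational numbers with −1 ≤ μ' ≤ μ and α_{μ'} = α_μ. Then β_{r',μ'} ≤ β_{r,μ} − α_μ². -/
/-!
Write `a` for the common value `α_μ = α_{μ'}`; then `0 ≤ a ≤ μ' + 1 ≤ μ + 1`.
Since `β_{r,μ} = r · β_{1,μ}`, lowering `μ` to `μ'` and `r` to `r' ≤ r - 1` gives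
`β_{r',μ'} ≤ β_{r,μ} − β_{1,μ}`, and `β_{1,μ} = a (2μ − a + 2) ≥ a²` because `2μ − a + 2 ≥ a`.
-/

lemma alphaQ_le_add_one (μ : ℚ) : alphaQ μ ≤ μ + 1 := by
  have := Int.floor_le μ
  unfold alphaQ
  linarith

lemma betaQ_sub (r s : ℤ) (μ : ℚ) : betaQ (r - s) μ = betaQ r μ - betaQ s μ := by
  simp only [betaQ, Int.cast_sub]
  ring

lemma betaQ_one_nonneg {μ : ℚ} (hμ : -1 ≤ μ) : 0 ≤ betaQ 1 μ :=
  (sq_nonneg _).trans (sq_alphaQ_le_betaQ_one hμ)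

lemma betaQ_le_betaQ_left {r r' : ℤ} {μ : ℚ} (hμ : -1 ≤ μ) (h : r' ≤ r) :
    betaQ r' μ ≤ betaQ r μ := by
  rw [betaQ_eq_mul_betaQ_one r', betaQ_eq_mul_betaQ_one r]
  exact mul_le_mul_of_nonneg_right (by exact_mod_cast h) (betaQ_one_nonneg hμ)

lemma betaQ_le_betaQ_of_alphaQ_eq {r : ℤ} {μ μ' : ℚ} (hr : 0 ≤ r) (hμ' : -1 ≤ μ')
    (h : μ' ≤ μ) (hα : alphaQ μ' = alphaQ μ) : betaQ r μ' ≤ betaQ r μ := by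
  unfold betaQ
  rw [hα]
  have hra : (0 : ℚ) ≤ r * alphaQ μ :=
    mul_nonneg (by exact_mod_cast hr) (hα ▸ alphaQ_nonneg hμ')
  exact mul_le_mul_of_nonneg_left (by linarith) hra

theorem stmt_13_general (r r' : ℤ) (hr'1 : 1 ≤ r') (hr' : r' ≤ r - 1)
    (μ μ' : ℚ) (hμ'1 : -1 ≤ μ') (hμμ : μ' ≤ μ) (hα : alphaQ μ' = alphaQ μ) :
    betaQ r' μ' ≤ betaQ r μ - (alphaQ μ) ^ 2 := by
  have hμ : -1 ≤ μ := hμ'1.trans hμμ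
  calc betaQ r' μ' ≤ betaQ r' μ := betaQ_le_betaQ_of_alphaQ_eq (by omega) hμ'1 hμμ hα
    _ ≤ betaQ (r - 1) μ := betaQ_le_betaQ_left hμ hr'
    _ = betaQ r μ - betaQ 1 μ := betaQ_sub r 1 μ
    _ ≤ betaQ r μ - alphaQ μ ^ 2 := sub_le_sub_left (sq_alphaQ_le_betaQ_one hμ) _

theorem stmt_13 (r r' : ℤ) (hr : 2 ≤ r) (hr'1 : 1 ≤ r') (hr' : r' ≤ r - 1)
    (μ μ' : ℚ) (hμ'1 : -1 ≤ μ') (hμμ : μ' ≤ μ) (hα : alphaQ μ' = alphaQ μ) :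
    betaQ r' μ' ≤ betaQ r μ - (alphaQ μ) ^ 2 :=
  stmt_13_general r r' hr'1 hr' μ μ' hμ'1 hμμ hα
end

section
/- Let r ≥ 2 and 1 ≤ r' ≤ r − 1 be integers, and let μ, μ' be rational numbers with μ ≥ 0, μ' ≥ −1 and α_{μ'} ≤ α_μ − 1. Then β_{r',μ'} < β_{r,μ} − α_μ². -/
lemma betaQ_le_mul_alphaQ_add_two {r : ℤ} {μ : ℚ} (hr : 0 ≤ r) (hα : 0 ≤ alphaQ μ) :
    betaQ r μ ≤ r * alphaQ μ * (alphaQ μ + 2) := by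
  have hrα : (0 : ℚ) ≤ r * alphaQ μ := mul_nonneg (by exact_mod_cast hr) hα
  exact mul_le_mul_of_nonneg_left (by linarith [lt_alphaQ μ]) hrα

lemma mul_alphaQ_sq_le_betaQ {r : ℤ} {μ : ℚ} (hr : 0 ≤ r) (hα : 0 ≤ alphaQ μ) :
    r * alphaQ μ ^ 2 ≤ betaQ r μ := by
  have hrα : (0 : ℚ) ≤ r * alphaQ μ := mul_nonneg (by exact_mod_cast hr) hα
  calc (r : ℚ) * alphaQ μ ^ 2 = r * alphaQ μ * alphaQ μ := by ring
    _ ≤ betaQ r μ := mul_le_mul_of_nonneg_left (by linarith [alphaQ_sub_one_le μ]) hrα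

theorem stmt_14_general (r r' : ℤ) (hr'1 : 1 ≤ r') (hr' : r' ≤ r - 1)
    (μ μ' : ℚ) (hμ'1 : -1 ≤ μ') (hα : alphaQ μ' ≤ alphaQ μ - 1) :
    betaQ r' μ' < betaQ r μ - (alphaQ μ) ^ 2 := by
  set A := alphaQ μ
  set A' := alphaQ μ'
  have hA' : 0 ≤ A' := alphaQ_nonneg hμ'1
  have hr'q : (r' : ℚ) ≤ r - 1 := by exact_mod_cast hr'
  have hrq : (1 : ℚ) ≤ r - 1 := le_trans (by exact_mod_cast hr'1) hr'q
  have hA'_sq : A' * (A' + 2) < A ^ 2 := by nlinarith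
  calc betaQ r' μ' ≤ r' * A' * (A' + 2) := betaQ_le_mul_alphaQ_add_two (by omega) hA'
    _ ≤ (r - 1) * (A' * (A' + 2)) := by
      rw [mul_assoc]; exact mul_le_mul_of_nonneg_right hr'q (by positivity)
    _ < (r - 1) * A ^ 2 := mul_lt_mul_of_pos_left hA'_sq (by linarith)
    _ ≤ betaQ r μ - A ^ 2 := by
      linarith [mul_alphaQ_sq_le_betaQ (r := r) (μ := μ) (by omega) (by linarith)]

theorem stmt_14 (r r' : ℤ) (hr : 2 ≤ r) (hr'1 : 1 ≤ r') (hr' : r' ≤ r - 1)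
    (μ μ' : ℚ) (hμ : 0 ≤ μ) (hμ'1 : -1 ≤ μ') (hα : alphaQ μ' ≤ alphaQ μ - 1) :
    betaQ r' μ' < betaQ r μ - (alphaQ μ) ^ 2 :=
  stmt_14_general r r' hr'1 hr' μ μ' hμ'1 hα
end
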